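/- Deduction with single-term classes: assume a state Π such that Deduction is applicable for some classes A, B ∈ Π with Γ ∥ f(s₁,…,sₙ) ∈ A and Δ ∥ f(t₁,…,tₙ) ∈ B, with resulting simultaneous most general unifier μ and side premises Γᵢ ∥ s'ᵢ, Δᵢ ∥ t'ᵢ ∈ norm(Dᵢ) for 1 ≤ i ≤ n producing the new class {Γ' ∥ f(s'₁,…,s'ₙ), Γ' ∥ f(t'₁,…,t'ₙ)}μ. Then Deduction is also applicable taking for A and B two variable-disjoint copies of the single-term class {f(x₁,…,xₙ) ∈ M ∥ f(x₁,…,xₙ)}, with simultaneous most general unifier μ' = {x₁ ↦ s'₁, …, xₙ ↦ s'ₙ, y₁ ↦ t'₁, …, yₙ ↦ t'ₙ} and resulting class {Γ'' ∥ f(s'₁,…,s'ₙ), f(t'₁,…,t'ₙ)}μ' where Γ'' = f(x₁,…,xₙ)∈M ∧ f(y₁,…,yₙ)∈M ∧ Γ₁ ∧ … ∧ Γₙ ∧ Δ₁ ∧ … ∧ Δₙ. -/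

import Mathlib

namespace NGCC

inductive Tm (F : Type) : Type
  | var : ℕ → Tm F
  | app : F → List (Tm F) → Tm F

instance {F : Type} : Inhabited (Tm F) := ⟨Tm.var 0⟩

namespace Tm
variable {F : Type}

def subst (σ : ℕ → Tm F) : Tm F → Tm F
  | var x => σ x
  | app f ts => app f (ts.attach.map fun t => t.1.subst σ)
  decreasing_by simp only [app.sizeOf_spec]; have h := List.sizeOf_lt_of_mem t.2; omega

def varsList : Tm F → List ℕ
  | var x => [x]
  | app _ ts => (ts.attach.map fun t => t.1.varsList).flatten
  decreasing_by simp only [app.sizeOf_spec]; have h := List.sizeOf_lt_of_mem t.2; omega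

def varsIn (t : Tm F) : Set ℕ := {x | x ∈ t.varsList}

def Ground (t : Tm F) : Prop := t.varsList = []

def size : Tm F → ℕ
  | var _ => 1
  | app _ ts => 1 + (ts.attach.map fun t => t.1.size).sum
  decreasing_by simp only [app.sizeOf_spec]; have h := List.sizeOf_lt_of_mem t.2; omega

def count (x : ℕ) : Tm F → ℕ
  | var y => if y = x then 1 else 0
  | app _ ts => (ts.attach.map fun t => count x t.1).sum
  decreasing_by simp only [app.sizeOf_spec]; have h := List.sizeOf_lt_of_mem t.2; omega

def eval {α : Type} (I : F → List α → α) (v : ℕ → α) : Tm F → α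
  | var x => v x
  | app f ts => I f (ts.attach.map fun t => t.1.eval I v)
  decreasing_by simp only [app.sizeOf_spec]; have h := List.sizeOf_lt_of_mem t.2; omega

end Tm


abbrev Subst (F : Type) := ℕ → Tm F

def Subst.dom {F : Type} (σ : Subst F) : Set ℕ := {x | σ x ≠ Tm.var x}

def Subst.comp {F : Type} (σ δ : Subst F) : Subst F := fun x => (σ x).subst δ

structure CTerm (F : Type) where
  constr : Set (Tm F)
  term : Tm F

abbrev CClass (F : Type) := Set (CTerm F)

variable {F : Type}

/-- Application of a substitution to a constraint (set of atoms `u ∈ M`). -/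
def substConstr (Γ : Set (Tm F)) (σ : Subst F) : Set (Tm F) := (fun u => u.subst σ) '' Γ

def CTerm.subst (ct : CTerm F) (σ : Subst F) : CTerm F :=
  ⟨substConstr ct.constr σ, ct.term.subst σ⟩

def substClass (A : CClass F) (σ : Subst F) : CClass F := (fun ct => ct.subst σ) '' A

/-- `Γσ` is true: every atom of `Γσ` belongs to `M`. -/
def ConstrHolds (M : Set (Tm F)) (Γ : Set (Tm F)) (σ : Subst F) : Prop :=
  substConstr Γ σ ⊆ M

/-- Satisfiability of a constraint with respect to `M`. -/
def ConstrSat (M : Set (Tm F)) (Γ : Set (Tm F)) : Prop :=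
  ∃ σ : Subst F, ConstrHolds M Γ σ

/-- `σ` is grounding for the class `A` (for all its constrained terms). -/
def GroundingForClass (σ : Subst F) (A : CClass F) : Prop :=
  ∀ ct ∈ A, (ct.term.subst σ).Ground ∧ ∀ u ∈ ct.constr, (u.subst σ).Ground

/-- Separating variables of a class. -/
def sepVars (A : CClass F) : Set ℕ := ⋂ ct ∈ A, (CTerm.term ct).varsIn

/-- All variables of the terms of a class. -/
def termVars (A : CClass F) : Set ℕ := ⋃ ct ∈ A, (CTerm.term ct).varsIn

/-- Free variables of a class. -/
def freeVars (A : CClass F) : Set ℕ := termVars A \ sepVars A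

/-- All variables occurring in a class (terms and constraints). -/
def varsAll (A : CClass F) : Set ℕ :=
  ⋃ ct ∈ A, ((CTerm.term ct).varsIn ∪ ⋃ u ∈ CTerm.constr ct, u.varsIn)

/-- `gnd'(A)`. -/
def gnd' (M : Set (Tm F)) (A : CClass F) : Set (CClass F) :=
  { B | ∃ σ : Subst F, Subst.dom σ = sepVars A ∧ (∀ x ∈ Subst.dom σ, (σ x).Ground) ∧
      B = { ct' | ∃ ct ∈ A, ConstrSat M (substConstr (CTerm.constr ct) σ) ∧ ct' = ct.subst σ } }

/-- `gnd(A)`: sets of ground terms. -/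
def gnd (M : Set (Tm F)) (A : CClass F) : Set (Set (Tm F)) :=
  { S | ∃ B ∈ gnd' M A,
      S = { t | ∃ σ : Subst F, GroundingForClass σ B ∧
              ∃ ct ∈ B, ConstrHolds M (CTerm.constr ct) σ ∧ t = (CTerm.term ct).subst σ } }

/-- The elements of `gnd(A)` regarded as classes of constrained ground terms. -/
def gndCl (M : Set (Tm F)) (A : CClass F) : Set (CClass F) :=
  { S | ∃ B ∈ gnd' M A,
      S = { ct' | ∃ σ : Subst F, GroundingForClass σ B ∧
              ∃ ct ∈ B, ConstrHolds M (CTerm.constr ct) σ ∧ ct' = ct.subst σ } }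

/-- `B` subsumes `A`. -/
def Subsumes (M : Set (Tm F)) (B A : CClass F) : Prop :=
  ∀ A' ∈ gnd M A, ∃ B' ∈ gnd M B, A' ⊆ B'

/-- `A` is `M`-constrained: the atom `sᵢ ∈ M` occurs in `Γᵢ` for each `Γᵢ ∥ sᵢ ∈ A`. -/
def MConstrained (A : CClass F) : Prop := ∀ ct ∈ A, CTerm.term ct ∈ CTerm.constr ct

/-- `ρ` is a renaming of the free variables of `A` to fresh variables. -/
def IsNormRenaming (A : CClass F) (ρ : Subst F) : Prop :=
  (∀ x, ∃ y, ρ x = Tm.var y) ∧ (∀ x, x ∉ freeVars A → ρ x = Tm.var x) ∧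
  (∀ x ∈ freeVars A, ∀ x' ∈ freeVars A, ρ x = ρ x' → x = x') ∧
  (∀ x ∈ freeVars A, ∀ y, ρ x = Tm.var y → y ∉ varsAll A)

/-- The normal class `norm(A)` for the renaming `ρ`. -/
def normC (A : CClass F) (ρ : Subst F) : CClass F :=
  { ct' | ∃ ct ∈ A, ct' = ⟨CTerm.constr ct ∪ substConstr (CTerm.constr ct) ρ, CTerm.term ct⟩ } ∪
  { ct' | ∃ ct ∈ A, ((CTerm.term ct).varsIn ∩ freeVars A).Nonempty ∧
      ct' = ⟨CTerm.constr ct ∪ substConstr (CTerm.constr ct) ρ, (CTerm.term ct).subst ρ⟩ }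

/-- `Aμ` for a grounding substitution `μ`: the set of ground terms
`{sμ | Γ ∥ s ∈ A and Γμ true}`. -/
def applyClass (M : Set (Tm F)) (A : CClass F) (μ : Subst F) : Set (Tm F) :=
  { t | ∃ ct ∈ A, ConstrHolds M (CTerm.constr ct) μ ∧ t = (CTerm.term ct).subst μ }

/-- Subterm relation. -/
inductive Subterm {F : Type} : Tm F → Tm F → Prop
  | refl (t : Tm F) : Subterm t t
  | app {s t : Tm F} (f : F) (ts : List (Tm F)) : t ∈ ts → Subterm s t → Subterm s (Tm.app f ts)

/-- `s` occurs as a (sub)term in `Π`. -/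
def OccursIn (s : Tm F) (P : Set (CClass F)) : Prop :=
  ∃ A ∈ P, ∃ ct ∈ A, Subterm s (CTerm.term ct) ∨ ∃ u ∈ CTerm.constr ct, Subterm s u

/-- `M` is `Π`-closed for the ground term `t`. -/
def PiClosed (M : Set (Tm F)) (P : Set (CClass F)) (t : Tm F) : Prop :=
  ∀ s, OccursIn s P → ∀ σ : Subst F, s.subst σ ∈ M →
    ∀ δ : Subst F, (∀ x, σ x ≠ δ x → δ x = t) → s.subst δ ∈ M

/-- Semantic equational consequence: every model of the (implicitly universally
quantified) equations is a model of `s ≈ t`. -/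
def Entails (Eqs : Set (Tm F × Tm F)) (s t : Tm F) : Prop :=
  ∀ (α : Type) (_ : Nonempty α) (I : F → List α → α) (v : ℕ → α),
    (∀ e ∈ Eqs, ∀ w : ℕ → α, Tm.eval I w e.1 = Tm.eval I w e.2) →
    Tm.eval I v s = Tm.eval I v t

/-- `gnd_M(E)`: ground instances of equations of `E` with all ground terms in `M`. -/
def gndM (M : Set (Tm F)) (E : Set (Tm F × Tm F)) : Set (Tm F × Tm F) :=
  { e | ∃ p ∈ E, ∃ σ : Subst F,
      e = (Tm.subst σ p.1, Tm.subst σ p.2) ∧ Tm.subst σ p.1 ∈ M ∧ Tm.subst σ p.2 ∈ M }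

def IsUnifier (μ : Subst F) (s t : Tm F) : Prop := s.subst μ = t.subst μ

def IsMGU (μ : Subst F) (s t : Tm F) : Prop :=
  IsUnifier μ s t ∧ ∀ τ : Subst F, IsUnifier τ s t → ∃ δ : Subst F, τ = Subst.comp μ δ

/-- Simultaneous most general unifier of the equations `s₁ = t₁` and `s₂ = t₂`. -/
def IsSimMGU (μ : Subst F) (s₁ t₁ s₂ t₂ : Tm F) : Prop :=
  IsUnifier μ s₁ t₁ ∧ IsUnifier μ s₂ t₂ ∧
  ∀ τ : Subst F, IsUnifier τ s₁ t₁ → IsUnifier τ s₂ t₂ → ∃ δ : Subst F, τ = Subst.comp μ δ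

/-- Conjoin a constraint to every constrained term of a class. -/
def addConstr (A : CClass F) (Γ : Set (Tm F)) : CClass F :=
  { ct' | ∃ ct ∈ A, ct' = ⟨CTerm.constr ct ∪ Γ, CTerm.term ct⟩ }

/-- The rules of the calculus CC(X). -/
inductive Step {F : Type} (M : Set (Tm F)) : Set (CClass F) → Set (CClass F) → Prop
  | merge (P : Set (CClass F)) (A B C' : CClass F) (ρA ρB μ : Subst F) (ct₁ ct₂ : CTerm F)
      (hA : A ∈ P) (hB : B ∈ P)
      (hρA : IsNormRenaming A ρA) (hρB : IsNormRenaming B ρB)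
      (h1 : ct₁ ∈ A) (h2 : ct₂ ∈ B)
      (hmgu : IsMGU μ ct₁.term ct₂.term)
      (hC' : C' = substClass (addConstr (normC A ρA) (ct₁.constr ∪ ct₂.constr) ∪
                               addConstr (normC B ρB) (ct₁.constr ∪ ct₂.constr)) μ)
      (hnsub : ∀ C ∈ P, ¬ Subsumes M C C') :
      Step M P (insert C' P)
  | deduction (P : Set (CClass F)) (A B C' : CClass F) (f : F)
      (ss ts ss' ts' : List (Tm F)) (Γ Δ : Set (Tm F)) (Γs Δs : List (Set (Tm F))) (μ : Subst F)
      (hA : A ∈ P) (hB : B ∈ P)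
      (h1 : (⟨Γ, Tm.app f ss⟩ : CTerm F) ∈ A)
      (h2 : (⟨Δ, Tm.app f ts⟩ : CTerm F) ∈ B)
      (hl1 : ss'.length = ss.length) (hl2 : ts'.length = ss.length)
      (hl3 : ts.length = ss.length) (hl4 : Γs.length = ss.length) (hl5 : Δs.length = ss.length)
      (hside : ∀ i < ss.length, ∃ D ∈ P, ∃ ρ : Subst F, IsNormRenaming D ρ ∧
          (⟨Γs[i]!, ss'[i]!⟩ : CTerm F) ∈ normC D ρ ∧ (⟨Δs[i]!, ts'[i]!⟩ : CTerm F) ∈ normC D ρ)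
      (hmgu : IsSimMGU μ (Tm.app f ss') (Tm.app f ss) (Tm.app f ts') (Tm.app f ts))
      (hC' : C' = substClass
          ({⟨Γ ∪ Δ ∪ ⋃₀ {G | G ∈ Γs} ∪ ⋃₀ {G | G ∈ Δs}, Tm.app f ss'⟩,
            ⟨Γ ∪ Δ ∪ ⋃₀ {G | G ∈ Γs} ∪ ⋃₀ {G | G ∈ Δs}, Tm.app f ts'⟩} : CClass F) μ)
      (hnsub : ∀ C ∈ P, ¬ Subsumes M C C') :
      Step M P (insert C' P)
  | subsump (P : Set (CClass F)) (A B : CClass F)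
      (hA : A ∈ P) (hB : B ∈ P) (hne : A ≠ B) (hsub : Subsumes M B A) :
      Step M P (P \ {A})

/-- The single-term class `{f(x₁,…,x_k) ∈ M ∥ f(x₁,…,x_k)}`. -/
def singleTermClass (ar : F → ℕ) (f : F) : CClass F :=
  {⟨{Tm.app f ((List.range (ar f)).map Tm.var)}, Tm.app f ((List.range (ar f)).map Tm.var)⟩}

/-- The initial state `Π₀` of CC(X) for the equations `E`. -/
def initState (ar : F → ℕ) (E : Set (Tm F × Tm F)) : Set (CClass F) :=
  { A | ∃ p ∈ E, A = ({⟨{p.1, p.2}, p.1⟩, ⟨{p.1, p.2}, p.2⟩} : CClass F) } ∪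
  { A | ∃ f : F, A = singleTermClass ar f }

/-- `B` subsumes `A` by matching. -/
def SubsumesByMatching (M : Set (Tm F)) (B A : CClass F) : Prop :=
  ∃ σ : Subst F, Subst.dom σ ⊆ sepVars B ∧ (∀ x ∈ sepVars B, (σ x).varsIn ⊆ varsAll A) ∧
    ∀ ct ∈ A, ∃ τ : Subst F, Subst.dom τ ⊆ freeVars B ∧
      (∀ y ∈ freeVars B, (τ y).varsIn ⊆ varsAll A) ∧
      ∃ ct' ∈ B, CTerm.term ct = ((CTerm.term ct').subst σ).subst τ ∧
        ∀ δ : Subst F, ConstrHolds M (CTerm.constr ct) δ →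
          ∃ δ' : Subst F,
            ConstrHolds M (substConstr (substConstr (substConstr (CTerm.constr ct') σ) τ) δ) δ'

/-- `M` determined by the symbol-count ordering and a bound `β`. -/
def Mle (β : Tm F) : Set (Tm F) := { t | t.Ground ∧ t.size ≤ β.size }

def varsFinset (t : Tm F) : Finset ℕ := t.varsList.toFinset

/-- Truth of the LIA abstraction `lic(t ⪯ β)` under an integer assignment `v`. -/
def licHolds (t β : Tm F) (v : ℕ → ℕ) : Prop :=
  (∀ x ∈ varsFinset t, 1 ≤ v x) ∧
  (∑ x ∈ varsFinset t, (t.count x : ℤ) * (v x : ℤ)) ≤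
    (β.size : ℤ) - ((t.size : ℤ) - ∑ x ∈ varsFinset t, (t.count x : ℤ))

namespace Tm

@[simp]
lemma subst_var (σ : Subst F) (x : ℕ) : (var x : Tm F).subst σ = σ x := by
  rw [subst]

@[simp]
lemma subst_app (σ : Subst F) (f : F) (ts : List (Tm F)) :
    (app f ts).subst σ = app f (ts.map (·.subst σ)) := by
  rw [subst]; simp

lemma mem_varsList_app {x : ℕ} {f : F} {ts : List (Tm F)} :
    x ∈ (app f ts).varsList ↔ ∃ t ∈ ts, x ∈ t.varsList := by
  rw [varsList]; simp

lemma subst_eq_self {σ : Subst F} :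
    ∀ t : Tm F, (∀ x ∈ t.varsList, σ x = var x) → t.subst σ = t
  | var x, h => by simpa using h x (by simp [varsList])
  | app f ts, h => by
      have hts : ts.map (·.subst σ) = ts.map id :=
        List.map_congr_left fun t ht =>
          subst_eq_self t fun x hx => h x (mem_varsList_app.2 ⟨t, ht, hx⟩)
      simpa using hts
  termination_by t => sizeOf t
  decreasing_by simp only [app.sizeOf_spec]; have := List.sizeOf_lt_of_mem ht; omega

lemma subst_subst (σ τ : Subst F) :
    ∀ t : Tm F, (t.subst σ).subst τ = t.subst (σ.comp τ)
  | var x => by simp [Subst.comp]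
  | app f ts => by
      simp only [subst_app, List.map_map, app.injEq, true_and]
      exact List.map_congr_left fun t ht => subst_subst σ τ t
  termination_by t => sizeOf t
  decreasing_by simp only [app.sizeOf_spec]; have := List.sizeOf_lt_of_mem ht; omega

lemma eq_on_varsList_of_subst_eq {σ τ : Subst F} :
    ∀ t : Tm F, t.subst σ = t.subst τ → ∀ x ∈ t.varsList, σ x = τ x
  | var x, h, y, hy => by
      obtain rfl : y = x := by simpa [varsList] using hy
      simpa using h
  | app f ts, h, y, hy => by
      obtain ⟨t, ht, hyt⟩ := mem_varsList_app.1 hy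
      simp only [subst_app, app.injEq, true_and, List.map_inj_left] at h
      exact eq_on_varsList_of_subst_eq t (h t ht) y hyt
  termination_by t => sizeOf t
  decreasing_by simp only [app.sizeOf_spec]; have := List.sizeOf_lt_of_mem ht; omega

lemma mem_varsIn_app_map_var {x : ℕ} {f : F} {xs : List ℕ} :
    x ∈ (app f (xs.map var)).varsIn ↔ x ∈ xs := by
  simp [varsIn, varsList]

@[simp]
lemma subst_app_map_var (σ : Subst F) (f : F) (xs : List ℕ) :
    (app f (xs.map var)).subst σ = app f (xs.map σ) := by
  simp [Function.comp_def]

end Tm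

@[simp]
lemma substConstr_union (Γ Δ : Set (Tm F)) (σ : Subst F) :
    substConstr (Γ ∪ Δ) σ = substConstr Γ σ ∪ substConstr Δ σ :=
  Set.image_union _ _ _

@[simp]
lemma substConstr_singleton (u : Tm F) (σ : Subst F) :
    substConstr {u} σ = {u.subst σ} :=
  Set.image_singleton

lemma substClass_pair (Γ : Set (Tm F)) (s t : Tm F) (σ : Subst F) :
    substClass ({⟨Γ, s⟩, ⟨Γ, t⟩} : CClass F) σ =
      {⟨substConstr Γ σ, s.subst σ⟩, ⟨substConstr Γ σ, t.subst σ⟩} := by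
  simp [substClass, CTerm.subst, Set.image_insert_eq]

/-- A substitution that maps each `tᵢ` onto `sᵢ`, fixes the `sᵢ` and moves only variables of the
`tᵢ` is most general: every unifier `τ` satisfies `tᵢ(μτ) = sᵢτ = tᵢτ`, so `μτ = τ`. -/
theorem isSimMGU_of_matching {μ : Subst F} {s₁ t₁ s₂ t₂ : Tm F}
    (hs₁ : s₁.subst μ = s₁) (hs₂ : s₂.subst μ = s₂)
    (ht₁ : t₁.subst μ = s₁) (ht₂ : t₂.subst μ = s₂)
    (hdom : μ.dom ⊆ t₁.varsIn ∪ t₂.varsIn) :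
    IsSimMGU μ s₁ t₁ s₂ t₂ := by
  refine ⟨hs₁.trans ht₁.symm, hs₂.trans ht₂.symm, fun τ hτ₁ hτ₂ => ⟨τ, funext fun z => ?_⟩⟩
  have agree : ∀ {s t : Tm F}, t.subst μ = s → s.subst τ = t.subst τ →
      ∀ x ∈ t.varsList, τ x = (μ.comp τ) x := fun ht hτ x hx =>
    (Tm.eq_on_varsList_of_subst_eq _ (by rw [← Tm.subst_subst, ht, hτ]) x hx).symm
  by_cases hz : z ∈ μ.dom
  · rcases hdom hz with hz | hz
    exacts [agree ht₁ hτ₁ z hz, agree ht₂ hτ₂ z hz]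
  · simp [Subst.comp, show μ z = Tm.var z from not_not.1 hz]

lemma _root_.List.map_eq_of_getElem! {α β : Type} [Inhabited α] [Inhabited β] (g : α → β)
    {xs : List α} {ys : List β} (hlen : ys.length = xs.length)
    (h : ∀ i < xs.length, g xs[i]! = ys[i]!) : xs.map g = ys := by
  refine List.ext_getElem (by simp [hlen]) fun i hi _ => ?_
  simp only [List.length_map] at hi
  simpa [getElem!_pos, hi, hlen] using h i hi

theorem deduction_single_term_classes_general {F : Type} (f : F)
    (ss ss' ts' : List (Tm F)) (Γs Δs : List (Set (Tm F)))
    (hl1 : ss'.length = ss.length) (hl2 : ts'.length = ss.length)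
    -- two variable-disjoint copies of the single-term class, with fresh variables
    (xs ys : List ℕ) (hx : xs.length = ss.length) (hy : ys.length = ss.length)
    (hfresh : ∀ z ∈ xs ++ ys, ∀ u ∈ ss' ++ ts', z ∉ u.varsIn)
    (μ' : Subst F)
    (hμ'x : ∀ i < ss.length, μ' (xs[i]!) = ss'[i]!)
    (hμ'y : ∀ i < ss.length, μ' (ys[i]!) = ts'[i]!)
    (hμ'id : ∀ z, z ∉ xs → z ∉ ys → μ' z = Tm.var z) :
    IsSimMGU μ' (Tm.app f ss') (Tm.app f (xs.map Tm.var))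
      (Tm.app f ts') (Tm.app f (ys.map Tm.var)) ∧
    substClass
      ({⟨{Tm.app f (xs.map Tm.var)} ∪ {Tm.app f (ys.map Tm.var)} ∪
           ⋃₀ {G | G ∈ Γs} ∪ ⋃₀ {G | G ∈ Δs}, Tm.app f ss'⟩,
        ⟨{Tm.app f (xs.map Tm.var)} ∪ {Tm.app f (ys.map Tm.var)} ∪
           ⋃₀ {G | G ∈ Γs} ∪ ⋃₀ {G | G ∈ Δs}, Tm.app f ts'⟩} : CClass F) μ' =
    ({⟨{Tm.app f ss'} ∪ {Tm.app f ts'} ∪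
         substConstr (⋃₀ {G | G ∈ Γs}) μ' ∪ substConstr (⋃₀ {G | G ∈ Δs}) μ',
       Tm.app f ss'⟩,
      ⟨{Tm.app f ss'} ∪ {Tm.app f ts'} ∪
         substConstr (⋃₀ {G | G ∈ Γs}) μ' ∪ substConstr (⋃₀ {G | G ∈ Δs}) μ',
       Tm.app f ts'⟩} : CClass F) := by
  have hfix : ∀ us, us ⊆ ss' ++ ts' → (Tm.app f us).subst μ' = Tm.app f us := by
    refine fun us hus => Tm.subst_eq_self _ fun z hz => ?_
    obtain ⟨u, hu, hzu⟩ := Tm.mem_varsList_app.1 hz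
    exact hμ'id z (fun h => hfresh z (List.mem_append_left _ h) u (hus hu) hzu)
      (fun h => hfresh z (List.mem_append_right _ h) u (hus hu) hzu)
  have hs₁ := hfix ss' (List.subset_append_left _ _)
  have hs₂ := hfix ts' (List.subset_append_right _ _)
  have ht₁ : (Tm.app f (xs.map Tm.var)).subst μ' = Tm.app f ss' := by
    rw [Tm.subst_app_map_var, List.map_eq_of_getElem! (ys := ss') μ' (by omega) (by rwa [hx])]
  have ht₂ : (Tm.app f (ys.map Tm.var)).subst μ' = Tm.app f ts' := by
    rw [Tm.subst_app_map_var, List.map_eq_of_getElem! (ys := ts') μ' (by omega) (by rwa [hy])]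
  have hdom : μ'.dom ⊆ (Tm.app f (xs.map Tm.var)).varsIn ∪ (Tm.app f (ys.map Tm.var)).varsIn := by
    intro z hz
    by_contra hzs
    simp only [Set.mem_union, Tm.mem_varsIn_app_map_var, not_or] at hzs
    exact hz (hμ'id z hzs.1 hzs.2)
  refine ⟨isSimMGU_of_matching hs₁ hs₂ ht₁ ht₂ hdom, ?_⟩
  rw [substClass_pair]
  simp only [substConstr_union, substConstr_singleton, ht₁, ht₂, hs₁, hs₂]

/-- Deduction with Single Term Classes. -/
theorem deduction_single_term_classes {F : Type} [Fintype F] [Nonempty F]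
    (M : Set (Tm F)) (P : Set (CClass F)) (A B : CClass F)
    (hA : A ∈ P) (hB : B ∈ P) (f : F)
    (ss ts ss' ts' : List (Tm F)) (Γ Δ : Set (Tm F)) (Γs Δs : List (Set (Tm F)))
    (μ : Subst F)
    (h1 : (⟨Γ, Tm.app f ss⟩ : CTerm F) ∈ A)
    (h2 : (⟨Δ, Tm.app f ts⟩ : CTerm F) ∈ B)
    (hl1 : ss'.length = ss.length) (hl2 : ts'.length = ss.length)
    (hl3 : ts.length = ss.length) (hl4 : Γs.length = ss.length) (hl5 : Δs.length = ss.length)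
    (hside : ∀ i < ss.length, ∃ D ∈ P, ∃ ρ : Subst F, IsNormRenaming D ρ ∧
        (⟨Γs[i]!, ss'[i]!⟩ : CTerm F) ∈ normC D ρ ∧ (⟨Δs[i]!, ts'[i]!⟩ : CTerm F) ∈ normC D ρ)
    (hmgu : IsSimMGU μ (Tm.app f ss') (Tm.app f ss) (Tm.app f ts') (Tm.app f ts))
    -- two variable-disjoint copies of the single-term class, with fresh variables
    (xs ys : List ℕ) (hx : xs.length = ss.length) (hy : ys.length = ss.length)
    (hnodup : (xs ++ ys).Nodup)
    (hfresh : ∀ z ∈ xs ++ ys, ∀ u ∈ ss' ++ ts', z ∉ u.varsIn)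
    (μ' : Subst F)
    (hμ'x : ∀ i < ss.length, μ' (xs[i]!) = ss'[i]!)
    (hμ'y : ∀ i < ss.length, μ' (ys[i]!) = ts'[i]!)
    (hμ'id : ∀ z, z ∉ xs → z ∉ ys → μ' z = Tm.var z) :
    IsSimMGU μ' (Tm.app f ss') (Tm.app f (xs.map Tm.var))
      (Tm.app f ts') (Tm.app f (ys.map Tm.var)) ∧
    substClass
      ({⟨{Tm.app f (xs.map Tm.var)} ∪ {Tm.app f (ys.map Tm.var)} ∪
           ⋃₀ {G | G ∈ Γs} ∪ ⋃₀ {G | G ∈ Δs}, Tm.app f ss'⟩,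
        ⟨{Tm.app f (xs.map Tm.var)} ∪ {Tm.app f (ys.map Tm.var)} ∪
           ⋃₀ {G | G ∈ Γs} ∪ ⋃₀ {G | G ∈ Δs}, Tm.app f ts'⟩} : CClass F) μ' =
    ({⟨{Tm.app f ss'} ∪ {Tm.app f ts'} ∪
         substConstr (⋃₀ {G | G ∈ Γs}) μ' ∪ substConstr (⋃₀ {G | G ∈ Δs}) μ',
       Tm.app f ss'⟩,
      ⟨{Tm.app f ss'} ∪ {Tm.app f ts'} ∪
         substConstr (⋃₀ {G | G ∈ Γs}) μ' ∪ substConstr (⋃₀ {G | G ∈ Δs}) μ',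
       Tm.app f ts'⟩} : CClass F) :=
  deduction_single_term_classes_general f ss ss' ts' Γs Δs hl1 hl2 xs ys hx hy hfresh μ' hμ'x hμ'y
    hμ'id

end NGCC
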